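/- Each of the three smooth vector fields v₁(x,y,w) = (1,0,0), v₂(x,y,w) = (0,1,0), and v₃(x,y,w) = (2x, y, w) on ℝ³ is an infinitesimal symmetry of the parabolic system Σ_P; hence so is every real linear combination a·v₃ + b·v₁ + c·v₂ with a,b,c ∈ ℝ. -/

import Mathlib

/-!
Bracketing with a constant field is a directional derivative, so the translations `v₁`, `v₂`
commute with `g₀` and with `f_P`, which depends on `w` only. The linear field `v₃` generates the
dilations `(x, y, w) ↦ (λ²x, λy, λw)`, under which `f_P` is equivariant: `Df_P (v₃ ξ) = v₃ (f_P ξ)`,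
so `[v₃, f_P] = 0`, while `[v₃, g₀] = -g₀`. Since the bracket is linear in its first argument
along differentiable fields, the symmetries form a vector space.
-/

open Real Set

/-- The state space ℝ³ with coordinates (x, y, w). -/
abbrev V3 : Type := Fin 3 → ℝ

/-- Lie bracket of vector fields: [v,u](ξ) = Du(ξ)·v(ξ) − Dv(ξ)·u(ξ). -/
noncomputable def lieBr (v u : V3 → V3) : V3 → V3 :=
  fun ξ => fderiv ℝ u ξ (v ξ) - fderiv ℝ v ξ (u ξ)

/-- `v` is an infinitesimal symmetry of the control-affine system `(f, g)` on `U`. -/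
def InfSymmOn (U : Set V3) (f g v : V3 → V3) : Prop :=
  ∀ ξ ∈ U, (∃ c : ℝ, lieBr v g ξ = c • g ξ) ∧ (∃ c : ℝ, lieBr v f ξ = c • g ξ)

/-- The control vector field g₀ = ∂/∂w. -/
def g0 : V3 → V3 := fun _ => ![0, 0, 1]

/-- Drift of the parabolic system Σ_P. -/
noncomputable def fP : V3 → V3 := fun ξ => ![(ξ 2) ^ 2, ξ 2, 0]

section LieBracket

variable {u v w : V3 → V3} {ξ : V3}

theorem lieBr_const_left (c : V3) : lieBr (fun _ => c) u ξ = fderiv ℝ u ξ c := by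
  simp [lieBr]

theorem lieBr_continuousLinearMap_left (L : V3 →L[ℝ] V3) :
    lieBr L u ξ = fderiv ℝ u ξ (L ξ) - L (u ξ) := by
  simp [lieBr]

theorem lieBr_add_left (hv : DifferentiableAt ℝ v ξ) (hw : DifferentiableAt ℝ w ξ) :
    lieBr (v + w) u ξ = lieBr v u ξ + lieBr w u ξ := by
  simp only [lieBr, fderiv_add hv hw, Pi.add_apply, map_add, add_apply]
  abel

theorem lieBr_smul_left (a : ℝ) : lieBr (a • v) u ξ = a • lieBr v u ξ := by
  simp only [lieBr, fderiv_const_smul_field, Pi.smul_apply, map_smul,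
    smul_apply, smul_sub]

end LieBracket

namespace InfSymmOn

variable {U : Set V3} {f g v w : V3 → V3}

theorem add (hv : InfSymmOn U f g v) (hw : InfSymmOn U f g w)
    (hv' : ∀ ξ ∈ U, DifferentiableAt ℝ v ξ) (hw' : ∀ ξ ∈ U, DifferentiableAt ℝ w ξ) :
    InfSymmOn U f g (v + w) := by
  intro ξ hξ
  obtain ⟨⟨a, ha⟩, ⟨b, hb⟩⟩ := hv ξ hξ
  obtain ⟨⟨c, hc⟩, ⟨d, hd⟩⟩ := hw ξ hξ
  refine ⟨⟨a + c, ?_⟩, ⟨b + d, ?_⟩⟩ <;>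
    simp only [lieBr_add_left (hv' ξ hξ) (hw' ξ hξ), add_smul, *]

theorem smul (hv : InfSymmOn U f g v) (a : ℝ) : InfSymmOn U f g (a • v) := by
  intro ξ hξ
  obtain ⟨⟨b, hb⟩, ⟨c, hc⟩⟩ := hv ξ hξ
  exact ⟨⟨a * b, by rw [lieBr_smul_left, hb, smul_smul]⟩,
    ⟨a * c, by rw [lieBr_smul_left, hc, smul_smul]⟩⟩

end InfSymmOn

theorem fderiv_vecCons₃_apply {E : Type*} [NormedAddCommGroup E] [NormedSpace ℝ E]
    {f₀ f₁ f₂ : E → ℝ} {x : E} (h₀ : DifferentiableAt ℝ f₀ x) (h₁ : DifferentiableAt ℝ f₁ x)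
    (h₂ : DifferentiableAt ℝ f₂ x) (h : E) :
    fderiv ℝ (fun y => ![f₀ y, f₁ y, f₂ y]) x h =
      ![fderiv ℝ f₀ x h, fderiv ℝ f₁ x h, fderiv ℝ f₂ x h] := by
  have hd : ∀ i, DifferentiableAt ℝ (fun y => ![f₀ y, f₁ y, f₂ y] i) x := by
    intro i; fin_cases i <;> assumption
  rw [fderiv_pi hd]
  ext i; fin_cases i <;> rfl

theorem fderiv_fP_apply (ξ h : V3) : fderiv ℝ fP ξ h = ![2 * ξ 2 * h 2, h 2, 0] := by
  have hcoord : HasFDerivAt (fun η : V3 => η 2) (ContinuousLinearMap.proj 2) ξ :=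
    hasFDerivAt_apply (𝕜 := ℝ) 2 ξ
  unfold fP
  rw [fderiv_vecCons₃_apply (by fun_prop) (by fun_prop) (by fun_prop),
    (hcoord.pow 2).fderiv, hcoord.fderiv]
  simp

theorem fderiv_g0 (ξ : V3) : fderiv ℝ g0 ξ = 0 := fderiv_const_apply _

theorem infSymmOn_fP_g0_const {U : Set V3} {c : V3} (hc : c 2 = 0) :
    InfSymmOn U fP g0 (fun _ => c) := by
  intro ξ _
  refine ⟨⟨0, ?_⟩, ⟨0, ?_⟩⟩
  · simp [lieBr_const_left, fderiv_g0]
  · rw [lieBr_const_left, fderiv_fP_apply, hc]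
    simp

open ContinuousLinearMap in
noncomputable def parabolicScaling : V3 →L[ℝ] V3 :=
  pi ![(2 : ℝ) • proj 0, proj 1, proj 2]

theorem coe_parabolicScaling :
    ⇑parabolicScaling = fun ξ : V3 => ![2 * ξ 0, ξ 1, ξ 2] := by
  funext ξ i; fin_cases i <;> rfl

theorem infSymmOn_fP_g0_parabolicScaling {U : Set V3} :
    InfSymmOn U fP g0 parabolicScaling := by
  intro ξ _
  refine ⟨⟨-1, ?_⟩, ⟨0, ?_⟩⟩ <;> rw [lieBr_continuousLinearMap_left, coe_parabolicScaling]
  · rw [fderiv_g0]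
    funext i; fin_cases i <;> simp [g0]
  · rw [fderiv_fP_apply]
    funext i; fin_cases i <;> simp [fP, sq, mul_assoc]

/-- v₁ = (1,0,0), v₂ = (0,1,0), v₃ = (2x,y,w) are infinitesimal symmetries
of Σ_P, and hence so is every real linear combination a·v₃ + b·v₁ + c·v₂. -/
theorem symmetries_of_parabolic :
    InfSymmOn univ fP g0 (fun _ => ![1, 0, 0]) ∧
    InfSymmOn univ fP g0 (fun _ => ![0, 1, 0]) ∧
    InfSymmOn univ fP g0 (fun ξ => ![2 * ξ 0, ξ 1, ξ 2]) ∧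
    ∀ a b c : ℝ,
      InfSymmOn univ fP g0
        (fun ξ => a • ![2 * ξ 0, ξ 1, ξ 2] + b • ![(1:ℝ), 0, 0] + c • ![(0:ℝ), 1, 0]) := by
  have h₁ : InfSymmOn univ fP g0 (fun _ => ![1, 0, 0]) := infSymmOn_fP_g0_const rfl
  have h₂ : InfSymmOn univ fP g0 (fun _ => ![0, 1, 0]) := infSymmOn_fP_g0_const rfl
  have h₃ : InfSymmOn univ fP g0 (fun ξ => ![2 * ξ 0, ξ 1, ξ 2]) :=
    coe_parabolicScaling ▸ infSymmOn_fP_g0_parabolicScaling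
  have hd₃ : Differentiable ℝ (fun ξ : V3 => ![2 * ξ 0, ξ 1, ξ 2]) :=
    coe_parabolicScaling ▸ parabolicScaling.differentiable
  refine ⟨h₁, h₂, h₃, fun a b c => ?_⟩
  exact ((h₃.smul a).add (h₁.smul b) (fun _ _ => by fun_prop) (fun _ _ => by fun_prop)).add
    (h₂.smul c) (fun _ _ => by fun_prop) (fun _ _ => by fun_prop)
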